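/- arXiv:2506.00554 — 4 statements merged into one kernel-verified Lean document; each statement's English description precedes it below -/
import Mathlib

section
/- The men-proposing Deferred Acceptance algorithm outputs the woman-pessimal stable matching: for every stable matching μ' of the same instance, every woman weakly prefers her partner under μ' to her DA partner. -/
open Classical

/-- A strict preference list over `Fin n`, encoded as a permutation whose inverse
gives the rank of each alternative (lower rank = more preferred). -/
abbrev Pref (n : ℕ) := Equiv.Perm (Fin n)

/-- A profile of preference lists, one for each of the `n` agents on one side. -/
abbrev Profile (n : ℕ) := Fin n → Pref n

/-- `a` is strictly preferred to `b` under the list `p`. -/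
def SPref {n : ℕ} (p : Pref n) (a b : Fin n) : Prop := p.symm a < p.symm b

/-- `a` is weakly preferred to `b` under the list `p`. -/
def WPref {n : ℕ} (p : Pref n) (a b : Fin n) : Prop := p.symm a ≤ p.symm b

/-- A matching: a bijection from men to women. -/
abbrev Matching (n : ℕ) := Fin n ≃ Fin n

/-- `(m, w)` is a blocking pair of `μ` w.r.t. men's profile `mp` and women's profile `wp`. -/
def Blocks {n : ℕ} (mp wp : Profile n) (μ : Matching n) (m w : Fin n) : Prop :=
  SPref (mp m) w (μ m) ∧ SPref (wp w) m (μ.symm w)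

/-- A matching is stable if it admits no blocking pair. -/
def IsStable {n : ℕ} (mp wp : Profile n) (μ : Matching n) : Prop :=
  ∀ m w, ¬ Blocks mp wp μ m w

instance {n : ℕ} : Nonempty (Matching n) := ⟨Equiv.refl _⟩

/-- The outcome of the men-proposing Deferred Acceptance algorithm, specified as
the (unique) man-optimal stable matching of the instance `⟨mp, wp⟩`. -/
noncomputable def DA {n : ℕ} (mp wp : Profile n) : Matching n :=
  Classical.epsilon fun μ => IsStable mp wp μ ∧
    ∀ μ' : Matching n, IsStable mp wp μ' → ∀ m, WPref (mp m) (μ m) (μ' m)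

/-- An accomplice manipulation at strategy profile `p` (men's reports; women truthful
with profile `wp`) by the pair `(m, w)`, via misreport `q` of man `m`: woman `w`
strictly benefits and man `m` is not worse off, w.r.t. the true profiles `mp`, `wp`. -/
def AccManip {n : ℕ} (mp wp : Profile n) (p : Profile n) (m w : Fin n) (q : Pref n) : Prop :=
  SPref (wp w) ((DA (Function.update p m q) wp).symm w) ((DA p wp).symm w) ∧
  WPref (mp m) (DA (Function.update p m q) wp m) (DA p wp m)

/-- `p` is a Nash equilibrium of the accomplice manipulation game with strategic pairs `P`. -/
def IsNE {n : ℕ} (mp wp : Profile n) (P : Set (Fin n × Fin n)) (p : Profile n) : Prop :=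
  ∀ m w, (m, w) ∈ P → ¬ ∃ q, AccManip mp wp p m w q

/-- `q` results from the list `cur` by a push-up of the set `X` above `star`
(= the current DA partner): the set of women ranked above `star` in `q` is exactly
the set of those ranked above `star` in `cur` together with `X`. -/
def IsPushUp {n : ℕ} (cur : Pref n) (star : Fin n) (X : Set (Fin n)) (q : Pref n) : Prop :=
  ∀ w, SPref q w star ↔ (SPref cur w star ∨ w ∈ X)

/-- One step of the push-up dynamic: some strategic pair `(m, w) ∈ P` performs a
no-regret push-up accomplice manipulation at profile `p`, yielding `p'`. -/
def PushUpStep {n : ℕ} (mp wp : Profile n) (P : Set (Fin n × Fin n))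
    (p p' : Profile n) : Prop :=
  ∃ m w, (m, w) ∈ P ∧ ∃ X q,
    X ⊆ {w' | SPref (p m) (DA p wp m) w'} ∧
    IsPushUp (p m) (DA p wp m) X q ∧
    p' = Function.update p m q ∧
    SPref (wp w) ((DA p' wp).symm w) ((DA p wp).symm w) ∧
    WPref (mp m) (DA p' wp m) (DA p wp m)

/-- A push-up dynamic: starts at the truthful profile, and at each step performs a
no-regret push-up accomplice manipulation by some strategic pair if one exists,
otherwise stays put. -/
def IsPushUpDynamic {n : ℕ} (mp wp : Profile n) (P : Set (Fin n × Fin n))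
    (p : ℕ → Profile n) : Prop :=
  p 0 = mp ∧ ∀ t,
    PushUpStep mp wp P (p t) (p (t + 1)) ∨
    (p (t + 1) = p t ∧ ¬ ∃ p', PushUpStep mp wp P (p t) p')

/-- A one-for-many manipulation at profile `p` by man `m` for beneficiary set `B`,
via misreport `q`: every woman in `B` weakly benefits, some woman in `B` strictly
benefits, and `m` is not worse off (true preferences). -/
def OFMManip {n : ℕ} (mp wp : Profile n) (p : Profile n) (m : Fin n)
    (B : Set (Fin n)) (q : Pref n) : Prop :=
  (∀ w ∈ B, WPref (wp w) ((DA (Function.update p m q) wp).symm w) ((DA p wp).symm w)) ∧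
  (∃ w ∈ B, SPref (wp w) ((DA (Function.update p m q) wp).symm w) ((DA p wp).symm w)) ∧
  WPref (mp m) (DA (Function.update p m q) wp m) (DA p wp m)

/-- Nash equilibrium of the one-for-many manipulation game with strategic men `Pm`
and beneficiary sets `B`. -/
def IsNEOFM {n : ℕ} (mp wp : Profile n) (Pm : Set (Fin n)) (B : Fin n → Set (Fin n))
    (p : Profile n) : Prop :=
  ∀ m ∈ Pm, ¬ ∃ q, OFMManip mp wp p m (B m) q

/-- `q` is obtained from `cur` by promoting (weakly moving up) exactly one man `a`,
leaving the relative order of all other men unchanged. -/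
def Inconspicuous {n : ℕ} (cur q : Pref n) : Prop :=
  ∃ a, (∀ x y, x ≠ a → y ≠ a → (SPref q x y ↔ SPref cur x y)) ∧
    (∀ x, SPref cur a x → SPref q a x)

/-- One step of the inconspicuous dynamic for the woman self-manipulation game:
some strategic woman `w ∈ Pw` performs an optimal inconspicuous self-manipulation
in the current instance `⟨mp, pw⟩`. -/
def InconspicuousStep {n : ℕ} (mp : Profile n) (Pw : Set (Fin n))
    (pw pw' : Profile n) : Prop :=
  ∃ w ∈ Pw, ∃ q,
    pw' = Function.update pw w q ∧
    Inconspicuous (pw w) q ∧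
    SPref (pw w) ((DA mp pw').symm w) ((DA mp pw).symm w) ∧
    ∀ q', WPref (pw w) ((DA mp pw').symm w) ((DA mp (Function.update pw w q')).symm w)

/-- The inconspicuous dynamic of the woman self-manipulation game: starts at the
truthful profile `wp`, and at each step performs an optimal inconspicuous
self-manipulation by some strategic woman if one exists, otherwise stays put. -/
def IsInconspicuousDynamic {n : ℕ} (mp wp : Profile n) (Pw : Set (Fin n))
    (pw : ℕ → Profile n) : Prop :=
  pw 0 = wp ∧ ∀ t,
    InconspicuousStep mp Pw (pw t) (pw (t + 1)) ∨
    (pw (t + 1) = pw t ∧ ¬ ∃ pw', InconspicuousStep mp Pw (pw t) pw')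

/-! Adachi's fixed-point proof of the existence of a man-optimal stable matching: with thresholds
`b w` (the rank of the partner a woman currently holds), each man gets the best woman who would
accept him, and symmetrically; the composite of the two antitone best-response maps is monotone,
stable matchings are exactly its fixed points, and its least fixed point is man-optimal. Women are
then pessimal: a woman preferring her man-optimal partner `m` would form a blocking pair with `m`
in any stable matching giving her someone worse. -/

lemma sPref_of_wPref_of_ne {n : ℕ} {p : Pref n} {a b : Fin n} (h : WPref p a b) (hab : a ≠ b) :
    SPref p a b :=
  lt_of_le_of_ne h (p.symm.injective.ne hab)

lemma IsStable.symm {n : ℕ} {mp wp : Profile n} {μ : Matching n} (h : IsStable mp wp μ) :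
    IsStable wp mp μ.symm :=
  fun w m hb => h m w ⟨hb.2, hb.1⟩

lemma IsStable.wPref_symm_of_forall_wPref {n : ℕ} {mp wp : Profile n} {μ ν : Matching n}
    (hμ : IsStable mp wp μ) (hν : ∀ m, WPref (mp m) (ν m) (μ m)) (w : Fin n) :
    WPref (wp w) (μ.symm w) (ν.symm w) := by
  obtain ⟨m, rfl⟩ := ν.surjective w
  rw [ν.symm_apply_apply]
  by_contra hw
  have hne : ν m ≠ μ m := fun h => hw (by rw [h, μ.symm_apply_apply]; exact le_rfl)
  exact hμ m (ν m) ⟨sPref_of_wPref_of_ne (hν m) hne, lt_of_not_ge hw⟩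

namespace StableMatching

open Finset Function

variable {n : ℕ}

/-- Rank of `a` in the list `p`, as an element of `Fin (n + 1)` so that `Fin.last n` can stand
for "no partner". -/
def rank (p : Pref n) (a : Fin n) : Fin (n + 1) := (p.symm a).castSucc

lemma rank_lt_last (p : Pref n) (a : Fin n) : rank p a < Fin.last n :=
  Fin.castSucc_lt_last _

lemma rank_injective (p : Pref n) : Injective (rank p) :=
  (Fin.castSucc_injective n).comp p.symm.injective

lemma rank_le_rank_iff {p : Pref n} {a b : Fin n} : rank p a ≤ rank p b ↔ WPref p a b :=
  Fin.castSucc_le_castSucc_iff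

lemma rank_lt_rank_iff {p : Pref n} {a b : Fin n} : rank p a < rank p b ↔ SPref p a b :=
  Fin.castSucc_lt_castSucc_iff

def partnerRank (p : Profile n) (μ : Matching n) (i : Fin n) : Fin (n + 1) :=
  rank (p i) (μ i)

/-- Agent `i`'s best response when each `j` on the other side accepts exactly the agents ranked
within its threshold `b j`; the empty infimum is `⊤ = Fin.last n`, i.e. "no partner". -/
noncomputable def bestRank (p q : Profile n) (b : Fin n → Fin (n + 1)) (i : Fin n) :
    Fin (n + 1) :=
  (univ.filter fun j => rank (q j) i ≤ b j).inf (rank (p i))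

section bestRank

variable {p q : Profile n} {a b : Fin n → Fin (n + 1)} {i j : Fin n}

lemma bestRank_antitone : Antitone (bestRank p q) :=
  fun _ _ hb i => inf_mono fun j hj => by
    simp only [mem_filter, mem_univ, true_and] at hj ⊢
    exact hj.trans (hb j)

lemma bestRank_le (h : rank (q j) i ≤ b j) : bestRank p q b i ≤ rank (p i) j :=
  inf_le (by simpa using h)

lemma lt_rank_of_rank_lt_bestRank (h : rank (p i) j < bestRank p q b i) : b j < rank (q j) i :=
  lt_of_not_ge fun hj => (bestRank_le hj).not_gt h

lemma exists_eq_bestRank (h : bestRank p q b i ≠ Fin.last n) :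
    ∃ j, rank (q j) i ≤ b j ∧ bestRank p q b i = rank (p i) j := by
  have hne : (univ.filter fun j => rank (q j) i ≤ b j).Nonempty :=
    nonempty_iff_ne_empty.2 fun he => h (by rw [bestRank, he, inf_empty, Fin.top_eq_last])
  obtain ⟨j, hj, heq⟩ := exists_mem_eq_inf _ hne (rank (p i))
  exact ⟨j, (mem_filter.1 hj).2, heq⟩

lemma bestRank_partnerRank_of_isStable {μ : Matching n} (hμ : IsStable p q μ) :
    bestRank p q (partnerRank q μ.symm) = partnerRank p μ := by
  funext i
  refine le_antisymm (bestRank_le (by simp [partnerRank])) (Finset.le_inf fun j hj => ?_)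
  simp only [mem_filter, mem_univ, true_and, partnerRank, rank_le_rank_iff] at hj ⊢
  by_contra hji
  have hne : i ≠ μ.symm j := by
    rintro rfl
    exact hji (by simp [WPref])
  exact hμ i j ⟨lt_of_not_ge hji, sPref_of_wPref_of_ne hj hne⟩

lemma exists_mutual_of_bestRank_fixed (hab : bestRank p q b = a) (hba : bestRank q p a = b)
    (h : a i ≠ Fin.last n) : ∃ j, a i = rank (p i) j ∧ b j = rank (q j) i := by
  subst hab
  obtain ⟨j, hj, heq⟩ := exists_eq_bestRank h
  exact ⟨j, heq, le_antisymm (hba ▸ bestRank_le heq.ge) hj⟩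

/-- If `i` were unmatched, every agent on the other side would be matched (they all rank `i`
below their threshold), which the mutual-partner injection back into `i`'s side forbids. -/
lemma ne_last_of_bestRank_fixed (hab : bestRank p q b = a) (hba : bestRank q p a = b) :
    a i ≠ Fin.last n := by
  intro hi
  have hb : ∀ j, b j ≠ Fin.last n := fun j hj =>
    have hij : a i ≤ rank (p i) j := hab ▸ bestRank_le (hj ▸ (rank_lt_last _ _).le)
    (hi ▸ hij).not_gt (rank_lt_last _ _)
  choose g hg using fun j => exists_mutual_of_bestRank_fixed hba hab (hb j)
  have hg_inj : Injective g := fun j j' h =>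
    rank_injective (p (g j)) (((hg j).2.symm.trans (congrArg a h)).trans (h ▸ (hg j').2))
  obtain ⟨j, rfl⟩ := (Finite.injective_iff_surjective.1 hg_inj) i
  exact (rank_lt_last _ _).ne ((hg j).2.symm.trans hi)

lemma exists_isStable_of_bestRank_fixed {mp wp : Profile n} (hab : bestRank mp wp b = a)
    (hba : bestRank wp mp a = b) : ∃ μ, IsStable mp wp μ ∧ partnerRank mp μ = a := by
  choose f hf using fun m =>
    exists_mutual_of_bestRank_fixed hab hba (ne_last_of_bestRank_fixed hab hba (i := m))
  have hf_inj : Injective f := fun m m' h =>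
    rank_injective (wp (f m)) ((hf m).2.symm.trans (h ▸ (hf m').2))
  set μ := Equiv.ofBijective f (Finite.injective_iff_bijective.1 hf_inj)
  have hμ_symm : ∀ w, b w = rank (wp w) (μ.symm w) := fun w => by
    have h := (hf (μ.symm w)).2
    rwa [show f (μ.symm w) = w from μ.apply_symm_apply w] at h
  refine ⟨μ, fun m w ⟨hm, hw⟩ => ?_, funext fun m => (hf m).1.symm⟩
  have hm' : rank (mp m) w < bestRank mp wp b m := by
    rw [hab, (hf m).1]
    exact rank_lt_rank_iff.2 hm
  have hw' := lt_rank_of_rank_lt_bestRank hm'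
  rw [hμ_symm, rank_lt_rank_iff] at hw'
  exact lt_asymm hw hw'

end bestRank

lemma exists_isStable_forall_wPref (mp wp : Profile n) : ∃ μ : Matching n, IsStable mp wp μ ∧
    ∀ μ' : Matching n, IsStable mp wp μ' → ∀ m, WPref (mp m) (μ m) (μ' m) := by
  let T : (Fin n → Fin (n + 1)) →o (Fin n → Fin (n + 1)) :=
    ⟨fun a => bestRank mp wp (bestRank wp mp a), bestRank_antitone.comp bestRank_antitone⟩
  obtain ⟨μ, hμ, hμa⟩ := exists_isStable_of_bestRank_fixed T.map_lfp rfl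
  refine ⟨μ, hμ, fun μ' hμ' m => rank_le_rank_iff.1 ?_⟩
  have hfix : T (partnerRank mp μ') = partnerRank mp μ' := by
    have hwomen := bestRank_partnerRank_of_isStable (IsStable.symm hμ')
    rw [μ'.symm_symm] at hwomen
    change bestRank mp wp (bestRank wp mp (partnerRank mp μ')) = _
    rw [hwomen, bestRank_partnerRank_of_isStable hμ']
  have hle := T.lfp_le_fixed hfix
  rw [← hμa] at hle
  exact hle m

end StableMatching

lemma DA_spec {n : ℕ} (mp wp : Profile n) : IsStable mp wp (DA mp wp) ∧
    ∀ μ' : Matching n, IsStable mp wp μ' → ∀ m, WPref (mp m) (DA mp wp m) (μ' m) :=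
  Classical.epsilon_spec (StableMatching.exists_isStable_forall_wPref mp wp)

theorem da_woman_pessimal {n : ℕ} (mp wp : Profile n) (μ' : Matching n)
    (hμ' : IsStable mp wp μ') (w : Fin n) :
    WPref (wp w) (μ'.symm w) ((DA mp wp).symm w) :=
  hμ'.wPref_symm_of_forall_wPref ((DA_spec mp wp).2 μ' hμ') w
end

section
/- There exist accomplice manipulation games admitting at least n! distinct pure-strategy Nash equilibria. Concretely: in the instance where for each i < n man m_i ranks woman w_i first and woman w_i ranks man m_i first, with the single strategic pair (m_n, w_n), every one of the n! possible reported orderings by m_n constitutes a Nash equilibrium profile. -/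
open Classical

lemma stable_eq_id {n : ℕ} (p wp : Profile n) (i₀ : Fin n)
    (h : ∀ i, i ≠ i₀ →
      (∀ j, j ≠ i → SPref (p i) i j) ∧ (∀ j, j ≠ i → SPref (wp i) i j)) :
    ∀ μ : Matching n, IsStable p wp μ → ∀ i, μ i = i := by
  intro μ hμ
  have key : ∀ i, i ≠ i₀ → μ i = i := by
    intro i hi
    by_contra hne
    apply hμ i i
    constructor
    · exact (h i hi).1 (μ i) hne
    · refine (h i hi).2 (μ.symm i) ?_
      intro e
      exact hne (((μ.symm_apply_eq).1 e).symm)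
  intro i
  by_cases hi : i = i₀
  · rw [hi]
    by_contra hne
    exact hne (μ.injective (key (μ i₀) hne))
  · exact key i hi

lemma da_eq_id {n : ℕ} (p wp : Profile n) (i₀ : Fin n)
    (h : ∀ i, i ≠ i₀ →
      (∀ j, j ≠ i → SPref (p i) i j) ∧ (∀ j, j ≠ i → SPref (wp i) i j)) :
    ∀ i, DA p wp i = i := by
  have hidstable : IsStable p wp (Equiv.refl (Fin n)) := by
    intro m w hb
    obtain ⟨h1, h2⟩ := hb
    simp only [Equiv.refl_apply, Equiv.refl_symm, Equiv.refl_apply] at h1 h2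
    by_cases hm : m = i₀
    · by_cases hw : w = i₀
      · rw [hw, hm] at h1; exact lt_irrefl _ h1
      · rw [hm] at h2
        exact lt_asymm h2 ((h w hw).2 i₀ (Ne.symm hw))
    · by_cases hw : w = m
      · subst hw; exact lt_irrefl _ h1
      · exact lt_asymm h1 ((h m hm).1 w hw)
  have hex : ∃ μ : Matching n, IsStable p wp μ ∧
      ∀ μ' : Matching n, IsStable p wp μ' → ∀ m, WPref (p m) (μ m) (μ' m) := by
    refine ⟨Equiv.refl _, hidstable, ?_⟩
    intro μ' hμ' m
    rw [stable_eq_id p wp i₀ h μ' hμ' m]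
    exact le_refl _
  have hspec := Classical.epsilon_spec hex
  exact stable_eq_id p wp i₀ h _ hspec.1

theorem factorially_many_ne {n : ℕ} (mp wp : Profile n) (i₀ : Fin n)
    (h : ∀ i, i ≠ i₀ →
      (∀ j, j ≠ i → SPref (mp i) i j) ∧ (∀ j, j ≠ i → SPref (wp i) i j)) :
    ∀ q : Pref n, IsNE mp wp {(i₀, i₀)} (Function.update mp i₀ q) := by
  intro q m w hmw
  simp only [Set.mem_singleton_iff, Prod.mk.injEq] at hmw
  obtain ⟨hm, hw⟩ := hmw
  rintro ⟨q', hq1, _⟩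
  rw [hm, hw] at hq1
  have hupd : ∀ (r : Pref n), ∀ i, i ≠ i₀ →
      (∀ j, j ≠ i → SPref (Function.update mp i₀ r i) i j) ∧
      (∀ j, j ≠ i → SPref (wp i) i j) := by
    intro r i hi
    rw [Function.update_of_ne hi]
    exact h i hi
  have h1 : ∀ i, DA (Function.update mp i₀ q) wp i = i :=
    da_eq_id _ wp i₀ (fun i hi => hupd q i hi)
  have h2 : ∀ i, DA (Function.update (Function.update mp i₀ q) i₀ q') wp i = i := by
    rw [Function.update_idem]
    exact da_eq_id _ wp i₀ (fun i hi => hupd q' i hi)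
  have e1 : (DA (Function.update mp i₀ q) wp).symm i₀ = i₀ :=
    (Equiv.symm_apply_eq _).2 (h1 i₀).symm
  have e2 : (DA (Function.update (Function.update mp i₀ q) i₀ q') wp).symm i₀ = i₀ :=
    (Equiv.symm_apply_eq _).2 (h2 i₀).symm
  rw [e1, e2] at hq1
  exact lt_irrefl _ hq1
end

section
/- In the instance from the previous context (mutual first choices for i < n), for every reported preference list of man m_n, the men-proposing DA matching matches m_i to w_i for all i < n and m_n to w_n. -/
open Classical

theorem mutual_top_da_identity {n : ℕ} (mp wp : Profile n) (i₀ : Fin n)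
    (h : ∀ i, i ≠ i₀ →
      (∀ j, j ≠ i → SPref (mp i) i j) ∧ (∀ j, j ≠ i → SPref (wp i) i j)) :
    ∀ q : Pref n, ∀ i, DA (Function.update mp i₀ q) wp i = i := by
  intro q
  set p := Function.update mp i₀ q with hp
  -- every stable matching is the identity
  have key : ∀ μ : Matching n, IsStable p wp μ → ∀ i, μ i = i := by
    intro μ hμ
    have hne : ∀ i, i ≠ i₀ → μ i = i := by
      intro i hi
      by_contra hmi
      have hsymm : μ.symm i ≠ i := by
        intro hs
        apply hmi
        have := congrArg μ hs
        simpa using this.symm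
      refine hμ i i ⟨?_, ?_⟩
      · have hpm : p i = mp i := Function.update_of_ne hi q mp
        rw [hpm]
        exact (h i hi).1 (μ i) hmi
      · exact (h i hi).2 (μ.symm i) hsymm
    intro i
    by_cases hi : i = i₀
    · subst hi
      by_contra hmi
      have h2 : μ (μ i) = μ i := hne (μ i) (fun he => hmi he)
      exact hmi (μ.injective h2)
    · exact hne i hi
  -- the identity is stable
  have hid : IsStable p wp (Equiv.refl (Fin n)) := by
    intro m w hb
    obtain ⟨h1, h2⟩ := hb
    simp only [Equiv.refl_apply, Equiv.refl_symm] at h1 h2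
    have hmw : m ≠ w := by
      rintro rfl; exact lt_irrefl _ h1
    by_cases hm : m = i₀
    · by_cases hw : w = i₀
      · exact hmw (hm.trans hw.symm)
      · exact absurd h2 (not_lt.2 (le_of_lt ((h w hw).2 m hmw)))
    · have hpm : p m = mp m := Function.update_of_ne hm q mp
      rw [hpm] at h1
      exact absurd h1 (not_lt.2 (le_of_lt ((h m hm).1 w hmw.symm)))
  have hpred : IsStable p wp (Equiv.refl (Fin n)) ∧
      ∀ μ' : Matching n, IsStable p wp μ' →
        ∀ m, WPref (p m) ((Equiv.refl (Fin n)) m) (μ' m) := by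
    refine ⟨hid, fun μ' hμ' m => ?_⟩
    rw [key μ' hμ' m]
    exact le_refl _
  have hspec := Classical.epsilon_spec (p := fun μ : Matching n =>
    IsStable p wp μ ∧ ∀ μ' : Matching n, IsStable p wp μ' →
      ∀ m, WPref (p m) (μ m) (μ' m)) ⟨Equiv.refl (Fin n), hpred⟩
  intro i
  exact key _ hspec.1 i
end

section
/- If a man's reported preference list is obtained from his current list by arbitrarily permuting the women above his DA partner and arbitrarily permuting the women below his DA partner (keeping his DA partner in the same position), then the men-proposing DA matching is unchanged. -/
open Classical

namespace DAHelper

variable {n : ℕ}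

lemma spref_val {p : Pref n} {a b : Fin n} : SPref p a b ↔ ((p.symm a : ℕ) < (p.symm b : ℕ)) := by
  unfold SPref; exact Fin.lt_def

lemma wpref_val {p : Pref n} {a b : Fin n} : WPref p a b ↔ ((p.symm a : ℕ) ≤ (p.symm b : ℕ)) := by
  unfold WPref; exact Fin.le_def

section Algo

variable (p wp : Profile n)

/-- current proposal target of each man -/
def tgt (k : Fin n → Fin n) (m : Fin n) : Fin n := p m (k m)

/-- `m` is rejected at state `k` -/
def Rej (k : Fin n → Fin n) (m : Fin n) : Prop :=
  ∃ m', tgt p k m' = tgt p k m ∧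
    (wp (tgt p k m)).symm m' < (wp (tgt p k m)).symm m

noncomputable def step (k : Fin n → Fin n) (m : Fin n) : Fin n :=
  if h : Rej p wp k m ∧ (k m : ℕ) + 1 < n then ⟨(k m : ℕ) + 1, h.2⟩ else k m

/-- key invariant: any woman a man's pointer has passed has a strictly better
current proposer -/
def Inv (k : Fin n → Fin n) : Prop :=
  ∀ m w, (p m).symm w < k m →
    ∃ m', tgt p k m' = w ∧ (wp w).symm m' < (wp w).symm m

lemma step_cases (k : Fin n → Fin n) (m : Fin n) :
    step p wp k m = k m ∨
      (Rej p wp k m ∧ ((step p wp k m : ℕ) = (k m : ℕ) + 1)) := by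
  unfold step; split
  · next h => exact Or.inr ⟨h.1, rfl⟩
  · exact Or.inl rfl

lemma le_step (k : Fin n → Fin n) (m : Fin n) : (k m : ℕ) ≤ (step p wp k m : ℕ) := by
  rcases step_cases p wp k m with h | ⟨_, h⟩ <;> simp [h]

lemma step_le_succ (k : Fin n → Fin n) (m : Fin n) :
    (step p wp k m : ℕ) ≤ (k m : ℕ) + 1 := by
  rcases step_cases p wp k m with h | ⟨_, h⟩ <;> simp [h]

lemma rej_of_step_ne {k : Fin n → Fin n} {m : Fin n}
    (h : step p wp k m ≠ k m) : Rej p wp k m := by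
  rcases step_cases p wp k m with h' | ⟨h', _⟩
  · exact absurd h' h
  · exact h'

lemma step_eq_of_not_rej {k : Fin n → Fin n} {m : Fin n}
    (h : ¬ Rej p wp k m) : step p wp k m = k m := by
  unfold step; rw [dif_neg]; tauto

lemma exists_best (k : Fin n → Fin n) (w : Fin n) (h : ∃ m', tgt p k m' = w) :
    ∃ y, tgt p k y = w ∧ ∀ m', tgt p k m' = w → (wp w).symm y ≤ (wp w).symm m' := by
  classical
  obtain ⟨y, hy, hmin⟩ := Finset.exists_min_image
    (Finset.univ.filter fun m' => tgt p k m' = w) (fun m' => (wp w).symm m')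
    ⟨h.choose, by simp [h.choose_spec]⟩
  exact ⟨y, (Finset.mem_filter.mp hy).2, fun m' hm' => hmin m' (by simp [hm'])⟩

lemma best_not_rej (k : Fin n → Fin n) (w y : Fin n) (hy : tgt p k y = w)
    (hmin : ∀ m', tgt p k m' = w → (wp w).symm y ≤ (wp w).symm m') :
    ¬ Rej p wp k y := by
  rintro ⟨m', h1, h2⟩
  rw [hy] at h1 h2
  exact absurd (hmin m' h1) (not_le.mpr h2)

lemma witness_persists {k : Fin n → Fin n} {w m : Fin n}
    (h : ∃ m', tgt p k m' = w ∧ (wp w).symm m' < (wp w).symm m) :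
    ∃ m', tgt p (step p wp k) m' = w ∧ (wp w).symm m' < (wp w).symm m := by
  obtain ⟨m', hm', hlt⟩ := h
  obtain ⟨y, hy, hmin⟩ := exists_best p wp k w ⟨m', hm'⟩
  have hs : step p wp k y = k y := step_eq_of_not_rej p wp (best_not_rej p wp k w y hy hmin)
  refine ⟨y, ?_, lt_of_le_of_lt (hmin m' hm') hlt⟩
  show p y (step p wp k y) = w
  rw [hs]; exact hy

lemma Inv_step {k : Fin n → Fin n} (hI : Inv p wp k) : Inv p wp (step p wp k) := by
  intro m w hlt
  by_cases hc : (p m).symm w < k m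
  · exact witness_persists p wp (hI m w hc)
  · have h1 : (k m : ℕ) ≤ ((p m).symm w : ℕ) := Fin.le_def.mp (not_lt.mp hc)
    have h2 : ((p m).symm w : ℕ) < (step p wp k m : ℕ) := Fin.lt_def.mp hlt
    have h3 := step_le_succ p wp k m
    have h4 : ((p m).symm w : ℕ) = (k m : ℕ) := by omega
    have hw : tgt p k m = w := by
      show p m (k m) = w
      have : k m = (p m).symm w := Fin.ext h4.symm
      rw [this, Equiv.apply_symm_apply]
    have hne : step p wp k m ≠ k m := by
      intro he; rw [he] at h2; omega
    obtain ⟨m', hm1, hm2⟩ := rej_of_step_ne p wp hne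
    rw [hw] at hm1 hm2
    exact witness_persists p wp ⟨m', hm1, hm2⟩

lemma rej_bound {k : Fin n → Fin n} (hI : Inv p wp k) {m : Fin n}
    (hr : Rej p wp k m) : (k m : ℕ) + 1 < n := by
  by_contra hb
  have hsur : Function.Surjective (tgt p k) := by
    intro w
    have hwle : ((p m).symm w : ℕ) ≤ (k m : ℕ) := by
      have := ((p m).symm w).isLt; omega
    rcases lt_or_eq_of_le hwle with h | h
    · obtain ⟨m', hm', _⟩ := hI m w (Fin.lt_def.mpr h)
      exact ⟨m', hm'⟩
    · refine ⟨m, ?_⟩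
      show p m (k m) = w
      have : k m = (p m).symm w := Fin.ext h.symm
      rw [this, Equiv.apply_symm_apply]
  have hinj : Function.Injective (tgt p k) := Finite.injective_iff_surjective.mpr hsur
  obtain ⟨m', h1, h2⟩ := hr
  rw [hinj h1] at h2
  exact lt_irrefl _ h2

end Algo

section Iter

variable (p wp : Profile n) (hn : 0 < n)

noncomputable def K (t : ℕ) : Fin n → Fin n :=
  (step p wp)^[t] (fun _ => ⟨0, hn⟩)

lemma K_succ (t : ℕ) : K p wp hn (t + 1) = step p wp (K p wp hn t) :=
  Function.iterate_succ_apply' _ _ _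

lemma Inv_K (t : ℕ) : Inv p wp (K p wp hn t) := by
  induction t with
  | zero =>
    intro m w h
    exact absurd (Fin.lt_def.mp h) (by simp [K])
  | succ t ih =>
    rw [K_succ]; exact Inv_step p wp ih

lemma K_mono (x : Fin n) : Monotone fun t => (K p wp hn t x : ℕ) := by
  apply monotone_nat_of_le_succ
  intro t
  rw [K_succ]
  exact le_step p wp _ x

lemma exists_fix : step p wp (K p wp hn (n * n)) = K p wp hn (n * n) := by
  by_contra hne
  have hconst : ∀ t s, step p wp (K p wp hn t) = K p wp hn t →
      K p wp hn (t + s) = K p wp hn t := by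
    intro t s h
    show (step p wp)^[t + s] _ = _
    rw [Nat.add_comm, Function.iterate_add_apply]
    exact Function.iterate_fixed h s
  have hsteps : ∀ t, t ≤ n * n → step p wp (K p wp hn t) ≠ K p wp hn t := by
    intro t ht h
    have := hconst t (n * n - t) h
    rw [Nat.add_sub_cancel' ht] at this
    rw [this] at hne
    exact hne h
  have htot : ∀ t, t ≤ n * n → t ≤ ∑ x : Fin n, (K p wp hn t x : ℕ) := by
    intro t
    induction t with
    | zero => intro _; exact Nat.zero_le _
    | succ t ih =>
      intro ht
      have ht' : t ≤ n * n := Nat.le_of_succ_le ht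
      have hlt : ∑ x : Fin n, (K p wp hn t x : ℕ) < ∑ x : Fin n, (K p wp hn (t+1) x : ℕ) := by
        apply Finset.sum_lt_sum
        · intro x _
          show (K p wp hn t x : ℕ) ≤ (K p wp hn (t+1) x : ℕ)
          simpa using K_mono p wp hn x (Nat.le_succ t)
        · have hne' := hsteps t ht'
          have : ∃ x, K p wp hn (t+1) x ≠ K p wp hn t x := by
            by_contra hno
            push_neg at hno
            apply hne'
            rw [← K_succ]
            exact funext hno
          obtain ⟨x, hx⟩ := this
          refine ⟨x, Finset.mem_univ x, ?_⟩
          have h1 : (K p wp hn t x : ℕ) ≤ (K p wp hn (t+1) x : ℕ) := by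
            simpa using K_mono p wp hn x (Nat.le_succ t)
          have h2 : (K p wp hn (t+1) x : ℕ) ≠ (K p wp hn t x : ℕ) :=
            fun he => hx (Fin.ext he)
          omega
      exact Nat.succ_le_of_lt (lt_of_le_of_lt (ih ht') hlt)
  have h1 := htot (n * n) le_rfl
  have h2 : ∑ x : Fin n, (K p wp hn (n*n) x : ℕ) ≤ ∑ _x : Fin n, (n - 1) := by
    apply Finset.sum_le_sum
    intro x _
    have := (K p wp hn (n*n) x).isLt
    omega
  rw [Finset.sum_const, Finset.card_univ, Fintype.card_fin, smul_eq_mul] at h2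
  have : n * (n - 1) < n * n := (Nat.mul_lt_mul_left hn).mpr (Nat.sub_lt hn one_pos)
  omega

noncomputable def kfin : Fin n → Fin n := K p wp hn (n * n)

lemma kfin_fix : step p wp (kfin p wp hn) = kfin p wp hn := exists_fix p wp hn

lemma K_of_ge {t : ℕ} (h : n * n ≤ t) : K p wp hn t = kfin p wp hn := by
  show (step p wp)^[t] _ = _
  rw [show t = (t - n * n) + (n * n) by omega, Function.iterate_add_apply]
  exact Function.iterate_fixed (kfin_fix p wp hn) _

lemma K_le_kfin (t : ℕ) (x : Fin n) : (K p wp hn t x : ℕ) ≤ (kfin p wp hn x : ℕ) := by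
  rcases le_total t (n * n) with h | h
  · exact K_mono p wp hn x h
  · rw [K_of_ge p wp hn h]

lemma Inv_kfin : Inv p wp (kfin p wp hn) := Inv_K p wp hn (n * n)

lemma not_rej_fix (m : Fin n) : ¬ Rej p wp (kfin p wp hn) m := by
  intro hr
  have hb := rej_bound p wp (Inv_kfin p wp hn) hr
  have h1 : step p wp (kfin p wp hn) m = ⟨(kfin p wp hn m : ℕ) + 1, hb⟩ :=
    dif_pos ⟨hr, hb⟩
  rw [kfin_fix] at h1
  have := congrArg Fin.val h1
  simp at this

lemma tgt_inj : Function.Injective (tgt p (kfin p wp hn)) := by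
  intro a b hab
  by_contra hne
  set w := tgt p (kfin p wp hn) b with hw
  rcases lt_trichotomy ((wp w).symm a) ((wp w).symm b) with h | h | h
  · exact not_rej_fix p wp hn b ⟨a, hab, h⟩
  · exact hne ((wp w).symm.injective h)
  · refine not_rej_fix p wp hn a ⟨b, hab.symm, ?_⟩
    rw [hab]; exact h

noncomputable def μalg : Matching n :=
  Equiv.ofBijective (tgt p (kfin p wp hn))
    (Finite.injective_iff_bijective.mp (tgt_inj p wp hn))

lemma μalg_apply (m : Fin n) : μalg p wp hn m = p m (kfin p wp hn m) := rfl

lemma μalg_symm {m w : Fin n} (h : tgt p (kfin p wp hn) m = w) :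
    (μalg p wp hn).symm w = m :=
  (μalg p wp hn).symm_apply_eq.mpr h.symm

lemma μalg_rank (m : Fin n) : (p m).symm (μalg p wp hn m) = kfin p wp hn m :=
  Equiv.symm_apply_apply _ _

lemma μalg_stable : IsStable p wp (μalg p wp hn) := by
  rintro m w ⟨h1, h2⟩
  have h1' : (p m).symm w < kfin p wp hn m := by
    rw [← μalg_rank p wp hn m]; exact h1
  obtain ⟨m', hm', hlt⟩ := Inv_kfin p wp hn m w h1'
  rw [μalg_symm p wp hn hm'] at h2
  exact lt_asymm hlt h2

lemma μalg_opt (ν : Matching n) (hν : IsStable p wp ν) (m : Fin n) :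
    (kfin p wp hn m : ℕ) ≤ ((p m).symm (ν m) : ℕ) := by
  have key : ∀ t m, (K p wp hn t m : ℕ) ≤ ((p m).symm (ν m) : ℕ) := by
    intro t
    induction t with
    | zero => intro m; simp [K]
    | succ t ih =>
      intro m
      rw [K_succ]
      rcases step_cases p wp (K p wp hn t) m with h | ⟨hr, hv⟩
      · rw [h]; exact ih m
      · rw [hv]
        rcases lt_or_eq_of_le (ih m) with h | h
        · omega
        · exfalso
          have hFin : K p wp hn t m = (p m).symm (ν m) := Fin.ext h
          have htgt : tgt p (K p wp hn t) m = ν m := by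
            show p m (K p wp hn t m) = ν m
            rw [hFin, Equiv.apply_symm_apply]
          obtain ⟨m', h1, h2⟩ := hr
          rw [htgt] at h1 h2
          have hm' : K p wp hn t m' = (p m').symm (ν m) :=
            ((p m').symm_apply_eq.mpr h1.symm).symm
          have := ih m'
          rw [hm'] at this
          rcases lt_or_eq_of_le this with h3 | h3
          · refine hν m' (ν m) ⟨Fin.lt_def.mpr h3, ?_⟩
            rw [Equiv.symm_apply_apply]
            exact h2
          · have : ν m' = ν m := by
              have : (p m').symm (ν m) = (p m').symm (ν m') := Fin.ext h3
              exact ((p m').symm.injective this).symm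
            rw [ν.injective this] at h2
            exact lt_irrefl _ h2
  exact key (n * n) m

end Iter

lemma exists_opt (p wp : Profile n) :
    ∃ μ : Matching n, IsStable p wp μ ∧
      ∀ μ' : Matching n, IsStable p wp μ' → ∀ m, WPref (p m) (μ m) (μ' m) := by
  rcases Nat.eq_zero_or_pos n with h0 | hn
  · subst h0
    exact ⟨Equiv.refl _, fun m => m.elim0, fun μ' _ m => m.elim0⟩
  · refine ⟨μalg p wp hn, μalg_stable p wp hn, fun ν hν m => ?_⟩
    rw [wpref_val, μalg_rank p wp hn m]
    exact μalg_opt p wp hn ν hν m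

lemma DA_spec (p wp : Profile n) :
    IsStable p wp (DA p wp) ∧
      ∀ μ' : Matching n, IsStable p wp μ' → ∀ m, WPref (p m) (DA p wp m) (μ' m) :=
  Classical.epsilon_spec (exists_opt p wp)

lemma DA_eq (p wp : Profile n) (hn : 0 < n) : DA p wp = μalg p wp hn := by
  obtain ⟨hs, ho⟩ := DA_spec p wp
  apply Equiv.ext
  intro m
  have h1 := ho (μalg p wp hn) (μalg_stable p wp hn) m
  have h2 : ((p m).symm (μalg p wp hn m) : ℕ) ≤ ((p m).symm (DA p wp m) : ℕ) := by
    rw [μalg_rank p wp hn m]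
    exact μalg_opt p wp hn (DA p wp) hs m
  rw [wpref_val] at h1
  exact (p m).symm.injective (Fin.ext (le_antisymm h1 h2))

lemma blocking (p wp : Profile n) (hn : 0 < n) (ν : Matching n) (x₀ : Fin n)
    (hx₀ : SPref (p x₀) (ν x₀) (μalg p wp hn x₀)) :
    ∃ y w, Blocks p wp ν y w ∧ ¬ SPref (p y) (ν y) (μalg p wp hn y) := by
  classical
  set μ := μalg p wp hn with hμdef
  set S : Finset (Fin n) := Finset.univ.filter (fun x => SPref (p x) (ν x) (μ x)) with hSdef
  have hx₀S : x₀ ∈ S := by simp [hSdef, hx₀]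
  have memS : ∀ x, x ∈ S ↔ SPref (p x) (ν x) (μ x) := by
    intro x; simp [hSdef]
  by_cases himg : S.image ν = S.image μ
  · -- algorithmic case
    obtain ⟨FA, hFAspec, hFAmin⟩ :
        ∃ FA : Fin n → ℕ, (∀ x, K p wp hn (FA x) x = kfin p wp hn x) ∧
          (∀ x t, t < FA x → K p wp hn t x ≠ kfin p wp hn x) :=
      ⟨fun x => Nat.find (⟨n * n, rfl⟩ : ∃ t, K p wp hn t x = kfin p wp hn x),
        fun x => Nat.find_spec (⟨n * n, rfl⟩ : ∃ t, K p wp hn t x = kfin p wp hn x),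
        fun x t ht => Nat.find_min (⟨n * n, rfl⟩ : ∃ t, K p wp hn t x = kfin p wp hn x) ht⟩
    have hSne : (S.image FA).Nonempty := ⟨FA x₀, Finset.mem_image_of_mem FA hx₀S⟩
    set T := (S.image FA).max' hSne with hTdef
    obtain ⟨m₀, hm₀S, hFAm₀⟩ := Finset.mem_image.mp ((S.image FA).max'_mem hSne)
    have hTle : ∀ z ∈ S, FA z ≤ T := fun z hz => Finset.le_max' _ _ (Finset.mem_image_of_mem FA hz)
    have harr : ∀ z ∈ S, K p wp hn T z = kfin p wp hn z := by
      intro z hz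
      apply Fin.ext
      refine le_antisymm (K_le_kfin p wp hn T z) ?_
      calc (kfin p wp hn z : ℕ) = (K p wp hn (FA z) z : ℕ) := by rw [hFAspec z]
        _ ≤ (K p wp hn T z : ℕ) := K_mono p wp hn z (hTle z hz)
    have hm₀SP : ((p m₀).symm (ν m₀) : ℕ) < (kfin p wp hn m₀ : ℕ) := by
      have := (memS m₀).mp hm₀S
      rw [spref_val, μalg_rank p wp hn m₀] at this
      exact this
    have hT1 : 1 ≤ T := by
      by_contra h
      have hT0 : T = 0 := by omega
      have := harr m₀ hm₀S
      rw [hT0] at this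
      have hv := congrArg Fin.val this
      simp [K] at hv
      omega
    have hT1' : T - 1 + 1 = T := by omega
    set w := μ m₀ with hwdef
    have hwrank : ((p m₀).symm w : ℕ) = (kfin p wp hn m₀ : ℕ) := by
      rw [hwdef, hμdef, μalg_rank]
    have hwimg : w ∈ S.image ν := by
      rw [himg]; exact Finset.mem_image_of_mem μ hm₀S
    obtain ⟨x, hxS, hxw⟩ := Finset.mem_image.mp hwimg
    have hxrank : ((p x).symm w : ℕ) < (kfin p wp hn x : ℕ) := by
      have := (memS x).mp hxS
      rw [spref_val, μalg_rank p wp hn x, hxw] at this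
      exact this
    have hTx : K p wp hn T x = kfin p wp hn x := harr x hxS
    -- a strictly better proposer than x at w exists at round T - 1
    have hwit : ∃ m', tgt p (K p wp hn (T-1)) m' = w ∧ (wp w).symm m' < (wp w).symm x := by
      rcases lt_or_ge ((p x).symm w : ℕ) ((K p wp hn (T-1) x : ℕ)) with hlt | hge
      · exact Inv_K p wp hn (T-1) x w (Fin.lt_def.mpr hlt)
      · have h1 : (K p wp hn T x : ℕ) ≤ (K p wp hn (T-1) x : ℕ) + 1 := by
          conv_lhs => rw [← hT1']
          rw [K_succ]
          exact step_le_succ p wp _ x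
        rw [hTx] at h1
        have h3 : (K p wp hn (T-1) x : ℕ) = ((p x).symm w : ℕ) := by omega
        have hstep : step p wp (K p wp hn (T-1)) x ≠ K p wp hn (T-1) x := by
          intro he
          rw [← K_succ, hT1'] at he
          have := congrArg Fin.val he
          rw [hTx] at this  -- kfin x = K (T-1) x
          omega
        obtain ⟨m', h1', h2'⟩ := rej_of_step_ne p wp hstep
        have htgt : tgt p (K p wp hn (T-1)) x = w := by
          show p x (K p wp hn (T-1) x) = w
          rw [Fin.ext h3, Equiv.apply_symm_apply]
        rw [htgt] at h1' h2'
        exact ⟨m', h1', h2'⟩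
    obtain ⟨y, hyw, hymin⟩ := exists_best p wp (K p wp hn (T-1)) w
      ⟨hwit.choose, hwit.choose_spec.1⟩
    have hyx : (wp w).symm y < (wp w).symm x :=
      lt_of_le_of_lt (hymin _ hwit.choose_spec.1) hwit.choose_spec.2
    have hystep : K p wp hn T y = K p wp hn (T-1) y := by
      rw [← hT1', K_succ]
      exact step_eq_of_not_rej p wp (best_not_rej p wp _ w y hyw hymin)
    have hyrank : K p wp hn T y = (p y).symm w := by
      rw [hystep]
      exact ((p y).symm_apply_eq.mpr hyw.symm).symm
    have hlt : ((p y).symm w : ℕ) < (kfin p wp hn y : ℕ) := by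
      rcases lt_or_eq_of_le (K_le_kfin p wp hn T y) with h | h
      · rw [hyrank] at h; exact h
      · exfalso
        rw [hyrank] at h
        -- kfin y = rank_y w  ⇒  μ y = w = μ m₀ ⇒ y = m₀
        have hkw : kfin p wp hn y = (p y).symm w := Fin.ext h.symm
        have hμy : μ y = w := by
          rw [hμdef, μalg_apply, hkw, Equiv.apply_symm_apply]
        have hym₀ : y = m₀ := μ.injective (hμy.trans hwdef)
        -- but m₀ has not arrived at round T - 1
        have hfmin := hFAmin m₀ (T - 1) (show T - 1 < FA m₀ by rw [hFAm₀]; omega)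
        apply hfmin
        have h1 : K p wp hn (T-1) y = (p y).symm w := by rw [← hystep, hyrank]
        rw [← hym₀]
        rw [h1, ← hkw]
    have hyS : y ∉ S := by
      intro hyS
      have h1 := harr y hyS
      rw [hyrank] at h1
      have := congrArg Fin.val h1
      omega
    have hnS : ¬ SPref (p y) (ν y) (μ y) := fun h => hyS ((memS y).mpr h)
    have hb1 : SPref (p y) w (ν y) := by
      have h2 : (kfin p wp hn y : ℕ) ≤ ((p y).symm (ν y) : ℕ) := by
        have := hnS
        rw [hμdef, spref_val, μalg_rank p wp hn y] at this
        omega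
      rw [spref_val]
      omega
    refine ⟨y, w, ⟨hb1, ?_⟩, hnS⟩
    rw [ν.symm_apply_eq.mpr hxw.symm]
    exact hyx
  · -- combinatorial case
    have hcard : (S.image ν).card = (S.image μ).card := by
      rw [Finset.card_image_of_injective _ ν.injective,
        Finset.card_image_of_injective _ μ.injective]
    have hne : (S.image ν \ S.image μ).Nonempty := by
      rw [Finset.sdiff_nonempty]
      intro hsub
      exact himg (Finset.eq_of_subset_of_card_le hsub (le_of_eq hcard.symm))
    obtain ⟨w, hw⟩ := hne
    rw [Finset.mem_sdiff] at hw
    obtain ⟨x, hxS, hxw⟩ := Finset.mem_image.mp hw.1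
    have hxsymm : ν.symm w = x := ν.symm_apply_eq.mpr hxw.symm
    set y := μ.symm w with hydef
    have hμy : μ y = w := μ.apply_symm_apply w
    have hyS : y ∉ S := fun hyS => hw.2 (Finset.mem_image.mpr ⟨y, hyS, hμy⟩)
    have hxSP : SPref (p x) w (μ x) := by
      have := (memS x).mp hxS
      rwa [hxw] at this
    have hyx : y ≠ x := fun h => hyS (h ▸ hxS)
    have hνy : ν y ≠ w := fun h => hyx (by rw [← hxsymm, ← h, Equiv.symm_apply_apply])
    have hnS : ¬ SPref (p y) (ν y) (μ y) := fun h => hyS ((memS y).mpr h)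
    have hblk1 : SPref (p y) w (ν y) := by
      rw [hμy] at hnS
      refine lt_of_le_of_ne (not_lt.mp hnS) ?_
      intro he
      exact hνy ((p y).symm.injective he).symm
    have hblk2 : SPref (wp w) y x := by
      by_contra hc
      have hxy : (wp w).symm x < (wp w).symm y := by
        refine lt_of_le_of_ne (not_lt.mp hc) ?_
        intro he
        exact hyx ((wp w).symm.injective he).symm
      exact μalg_stable p wp hn x w ⟨hxSP, hxy⟩
    refine ⟨y, w, ⟨hblk1, ?_⟩, hnS⟩
    rw [hxsymm]
    exact hblk2

lemma blocking_DA (p wp : Profile n) (hn : 0 < n) (ν : Matching n) (x₀ : Fin n)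
    (hx₀ : SPref (p x₀) (ν x₀) (DA p wp x₀)) :
    ∃ y w, Blocks p wp ν y w ∧ ¬ SPref (p y) (ν y) (DA p wp y) := by
  rw [DA_eq p wp hn] at hx₀ ⊢
  exact blocking p wp hn ν x₀ hx₀

end DAHelper

theorem within_block_permutation_invariance {n : ℕ} (mp wp : Profile n)
    (m : Fin n) (q : Pref n)
    (hq : ∀ w, SPref q w (DA mp wp m) ↔ SPref (mp m) w (DA mp wp m)) :
    DA (Function.update mp m q) wp = DA mp wp := by
  rcases Nat.eq_zero_or_pos n with h0 | hn
  · subst h0; exact Equiv.ext fun x => x.elim0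
  classical
  obtain ⟨hμs, hμo⟩ := DAHelper.DA_spec mp wp
  set μ := DA mp wp with hμdef
  set mp' := Function.update mp m q with hmp'def
  obtain ⟨hνs, hνo⟩ := DAHelper.DA_spec mp' wp
  set ν := DA mp' wp with hνdef
  have hmp'm : mp' m = q := Function.update_self m q mp
  have hmp'x : ∀ x, x ≠ m → mp' x = mp x := fun x hx => Function.update_of_ne hx q mp
  -- μ is stable under the misreported profile as well
  have hμs' : IsStable mp' wp μ := by
    rintro x w ⟨h1, h2⟩
    by_cases hx : x = m
    · rw [hx, hmp'm] at h1
      rw [hx] at h2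
      exact hμs m w ⟨(hq w).mp h1, h2⟩
    · rw [hmp'x x hx] at h1
      exact hμs x w ⟨h1, h2⟩
  have hb : ∀ x, WPref (mp' x) (ν x) (μ x) := hνo μ hμs'
  -- no man strictly prefers ν to μ under the true profile
  have hS : ∀ x, ¬ SPref (mp x) (ν x) (μ x) := by
    intro x hx
    obtain ⟨y, w, hblk, hyS⟩ := DAHelper.blocking_DA mp wp hn ν x hx
    by_cases hy : y = m
    · rw [hy] at hblk hyS
      have hbm : WPref q (ν m) (μ m) := by
        have := hb m; rwa [hmp'm] at this
      by_cases hνm : ν m = μ m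
      · refine hνs m w ⟨?_, hblk.2⟩
        rw [hmp'm, hνm]
        refine (hq w).mpr ?_
        have h1 := hblk.1
        rwa [hνm] at h1
      · apply hyS
        have h1 : SPref q (ν m) (μ m) :=
          lt_of_le_of_ne hbm (fun he => hνm (q.symm.injective he))
        exact (hq (ν m)).mp h1
    · refine hνs y w ⟨?_, hblk.2⟩
      rw [hmp'x y hy]
      exact hblk.1
  -- hence ν = μ
  apply Equiv.ext
  intro x
  show ν x = μ x
  by_cases hx : x = m
  · rw [hx]
    by_contra hne
    have hbm : WPref q (ν m) (μ m) := by
      have := hb m; rwa [hmp'm] at this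
    have h1 : SPref q (ν m) (μ m) :=
      lt_of_le_of_ne hbm (fun he => hne (q.symm.injective he))
    exact hS m ((hq (ν m)).mp h1)
    
  · have h1 := hb x
    rw [hmp'x x hx] at h1
    have h2 := hS x
    exact (mp x).symm.injective (le_antisymm h1 (not_lt.mp h2))
end
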